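/- arXiv:2304.09144 — 3 statements merged into one kernel-verified Lean document; each statement's English description precedes it below -/
import Mathlib

section
/- If $b^3 = (ab)^3 = (ab^{-1})^3 = 1$ in a group, then $[a^b, a] = 1$, i.e., $a$ commutes with its conjugate $bab^{-1}$. -/
open scoped commutatorElement

theorem mul_self_eq_inv_of_pow_three_eq_one {G : Type*} [Group G] {x : G} (h : x ^ 3 = 1) :
    x * x = x⁻¹ :=
  eq_inv_of_mul_eq_one_left (by rwa [← pow_three'])

/-- If `b³ = (ab)³ = (ab⁻¹)³ = 1` in a group, then `[a^b, a] = 1`,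
i.e. `a` commutes with its conjugate `b a b⁻¹`. -/
theorem stmt_1 {G : Type*} [Group G] (a b : G)
    (h1 : b ^ 3 = 1) (h2 : (a * b) ^ 3 = 1) (h3 : (a * b⁻¹) ^ 3 = 1) :
    ⁅b * a * b⁻¹, a⁆ = 1 := by
  rw [commutatorElement_eq_one_iff_commute]
  calc b * a * b⁻¹ * a = b * (a * b⁻¹ * (a * b⁻¹)) * b := by group
    _ = b * b * a⁻¹ * b := by rw [mul_self_eq_inv_of_pow_three_eq_one h3]; group
    _ = b⁻¹ * a⁻¹ * b := by rw [mul_self_eq_inv_of_pow_three_eq_one h1]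
    _ = b⁻¹ * a⁻¹ * (b * b)⁻¹ := by rw [mul_self_eq_inv_of_pow_three_eq_one h1, inv_inv]
    _ = (a * b)⁻¹ * b⁻¹ * b⁻¹ := by group
    _ = a * b * (a * b) * b⁻¹ * b⁻¹ := by rw [mul_self_eq_inv_of_pow_three_eq_one h2]
    _ = a * (b * a * b⁻¹) := by group
end

section
/- If $[a^b,a]=[a^c,a]=[a^b,a^c]=[b^a,b]=[(bc)^a,bc]=[c^b,c]=[c^{ba},c]=1$ in a group, then $[a,b,c]^{-1}=[a,c,b]$, where $[x,y,z]=[[x,y],z]$. -/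
open scoped commutatorElement

/-!
Write `p = a^b`, `q = a^c` and `r = a^{bc} = q^b`. Conjugating `[a^c, a] = [a^b, a^c] = 1` by `b`
shows that `r` commutes with `p` and with `p^b`; as `[b^a, b] = 1` amounts to `p^b = p a⁻¹ p`,
`r` also commutes with `a`. The hypotheses on `bc` and on `c^b, c^{ba}` express `r^c` and `p^c`
through `a, p, q, r`. Substituting them into `[a,b,c]⁻¹ = q (p^c)⁻¹ p a⁻¹` leaves
`a p⁻¹ a q⁻¹ r a⁻¹`, which the commutation relations turn into `a q⁻¹ r p⁻¹ = [a,c,b]`.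
-/

section

variable {G : Type*} [Group G]

theorem commute_commutatorElement_of_commute_conj {x y : G} (h : Commute (x * y * x⁻¹) y) :
    Commute ⁅x, y⁆ y := by
  rw [commutatorElement_def]
  exact h.mul_left (Commute.refl y).inv_left

theorem inv_mul_mul_eq_of_commute_conj {x y : G} (h : Commute (x * y * x⁻¹) y) :
    y⁻¹ * x * y = x * (y * x * y⁻¹)⁻¹ * x := by
  have h' := (commute_commutatorElement_of_commute_conj h).symm.inv_left.mul_inv_cancel
  calc y⁻¹ * x * y = y⁻¹ * ⁅x, y⁆ * y⁻¹⁻¹ * x := by group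
    _ = x * (y * x * y⁻¹)⁻¹ * x := by rw [h', commutatorElement_def]; group

theorem Commute.of_commute_conj_of_commute_conj_conj {x y z : G}
    (h : Commute (x * y * x⁻¹) y) (h₁ : Commute z (y * x * y⁻¹))
    (h₂ : Commute z (y * (y * x * y⁻¹) * y⁻¹)) : Commute z x := by
  have hx : x = y * x * y⁻¹ * (y * (y * x * y⁻¹) * y⁻¹)⁻¹ * (y * x * y⁻¹) :=
    calc x = y * (y⁻¹ * x * y) * y⁻¹ := by group
      _ = _ := by rw [inv_mul_mul_eq_of_commute_conj h]; group
  rw [hx]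
  exact (h₁.mul_right h₂.inv_right).mul_right h₁

theorem conj_conj_conj_eq_of_commute_conj {a b c : G} (hb : Commute (a * b * a⁻¹) b)
    (hbc : Commute (a * (b * c) * a⁻¹) (b * c)) :
    c * (b * (c * a * c⁻¹) * b⁻¹) * c⁻¹
      = c * a * c⁻¹ * a⁻¹ * (b * a * b⁻¹) * a⁻¹ * (c * a * c⁻¹) := by
  have hW := (commute_commutatorElement_of_commute_conj hbc).symm.mul_inv_cancel
  calc c * (b * (c * a * c⁻¹) * b⁻¹) * c⁻¹
      = (b⁻¹ * (b * c * ⁅a, b * c⁆ * (b * c)⁻¹) * b)⁻¹ * (c * a * c⁻¹) := by group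
    _ = (b⁻¹ * a * b * (c * a * c⁻¹)⁻¹)⁻¹ * (c * a * c⁻¹) := by rw [hW]; group
    _ = _ := by rw [inv_mul_mul_eq_of_commute_conj hb]; group

theorem conj_conj_eq_of_commute_conj_conj {a b c : G} (hc : Commute (b * c * b⁻¹) c)
    (hac : Commute (b * a * c * a⁻¹ * b⁻¹) c) :
    c * (b * a * b⁻¹) * c⁻¹
      = b * a * b⁻¹ * (b * (c * a * c⁻¹) * b⁻¹)⁻¹ * (c * (b * (c * a * c⁻¹) * b⁻¹) * c⁻¹) := by
  have hv := (hac.mul_left hc.inv_left).symm.mul_inv_cancel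
  calc c * (b * a * b⁻¹) * c⁻¹
      = c * (b * a * c * a⁻¹ * b⁻¹ * (b * c * b⁻¹)⁻¹) * c⁻¹
          * (c * (b * (c * a * c⁻¹) * b⁻¹) * c⁻¹) := by group
    _ = _ := by rw [hv]; group

end

theorem stmt_3_general {G : Type*} [Group G] (a b c : G)
    (h2 : ⁅c * a * c⁻¹, a⁆ = 1)
    (h3 : ⁅b * a * b⁻¹, c * a * c⁻¹⁆ = 1)
    (h4 : ⁅a * b * a⁻¹, b⁆ = 1)
    (h5 : ⁅a * (b * c) * a⁻¹, b * c⁆ = 1)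
    (h6 : ⁅b * c * b⁻¹, c⁆ = 1)
    (h7 : ⁅b * a * c * a⁻¹ * b⁻¹, c⁆ = 1) :
    ⁅⁅a, b⁆, c⁆⁻¹ = ⁅⁅a, c⁆, b⁆ := by
  simp only [commutatorElement_eq_one_iff_commute] at h2 h3 h4 h5 h6 h7
  have hcr := conj_conj_conj_eq_of_commute_conj h4 h5
  have hcp := conj_conj_eq_of_commute_conj_conj h6 h7
  have hrp : Commute (b * (c * a * c⁻¹) * b⁻¹) (b * a * b⁻¹) := by
    simpa only [MulAut.conj_apply, mul_assoc] using h2.map (MulAut.conj b)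
  have hrpb : Commute (b * (c * a * c⁻¹) * b⁻¹) (b * (b * a * b⁻¹) * b⁻¹) := by
    simpa only [MulAut.conj_apply, mul_assoc] using h3.symm.map (MulAut.conj b)
  have hra := Commute.of_commute_conj_of_commute_conj_conj h4 hrp hrpb
  set p := b * a * b⁻¹ with hp
  set q := c * a * c⁻¹ with hq
  set r := b * q * b⁻¹ with hr
  have haqr : Commute a (q⁻¹ * r) := h2.symm.inv_right.mul_right hra.symm
  have hpqr : Commute p⁻¹ (q⁻¹ * r) := (h3.inv_right.mul_right hrp.symm).inv_left
  calc ⁅⁅a, b⁆, c⁆⁻¹ = q * (c * p * c⁻¹)⁻¹ * p * a⁻¹ := by rw [hq, hp]; group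
    _ = a * p⁻¹ * (a * (q⁻¹ * r) * a⁻¹) := by rw [hcp, hcr]; group
    _ = a * (p⁻¹ * (q⁻¹ * r)) := by rw [haqr.mul_inv_cancel]; group
    _ = ⁅⁅a, c⁆, b⁆ := by rw [hpqr.eq, hr, hq, hp]; group

/-- If `[a^b,a] = [a^c,a] = [a^b,a^c] = [b^a,b] = [(bc)^a,bc] = [c^b,c] = [c^{ba},c] = 1`
in a group, then `[a,b,c]⁻¹ = [a,c,b]`, where `[x,y,z] = [[x,y],z]`,
`x^y = y x y⁻¹`, and `c^{ba} = (c^a)^b = b a c a⁻¹ b⁻¹`. -/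
theorem stmt_3 {G : Type*} [Group G] (a b c : G)
    (h1 : ⁅b * a * b⁻¹, a⁆ = 1)
    (h2 : ⁅c * a * c⁻¹, a⁆ = 1)
    (h3 : ⁅b * a * b⁻¹, c * a * c⁻¹⁆ = 1)
    (h4 : ⁅a * b * a⁻¹, b⁆ = 1)
    (h5 : ⁅a * (b * c) * a⁻¹, b * c⁆ = 1)
    (h6 : ⁅b * c * b⁻¹, c⁆ = 1)
    (h7 : ⁅b * a * c * a⁻¹ * b⁻¹, c⁆ = 1) :
    ⁅⁅a, b⁆, c⁆⁻¹ = ⁅⁅a, c⁆, b⁆ :=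
  stmt_3_general a b c h2 h3 h4 h5 h6 h7
end

section
/- Let $H$ be a group not satisfying a law $w \in F_d$ (i.e., there exist $h_1,\dots,h_d \in H$ with $w(h_1,\dots,h_d) \neq 1$), and let $G$ be an infinite group. Then the restricted wreath product $H \wr G = (\bigoplus_{g \in G} H) \rtimes G$ does not virtually satisfy $w$: no finite-index subgroup of $H \wr G$ satisfies $w$. -/
open Function

/-- The base group of the restricted wreath product: finitely supported
functions `G → H`, as a subgroup of the full product. -/
def RestrictedBase (G H : Type*) [Group H] : Subgroup (G → H) where
  carrier := {f | (mulSupport f).Finite}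
  one_mem' := by
    simp only [Set.mem_setOf_eq]
    rw [show (1 : G → H) = fun _ => (1 : H) from rfl]
    simp
  mul_mem' := by
    intro a b ha hb
    exact (ha.union hb).subset (mulSupport_mul a b)
  inv_mem' := by
    intro a ha
    simpa [mulSupport_inv] using ha

/-- The shift action of `G` on the finitely supported functions `G → H`,
given by `(g • f) a = f (g⁻¹ a)`. -/
def wreathAction (G H : Type*) [Group G] [Group H] :
    G →* MulAut (RestrictedBase G H) where
  toFun g :=
    { toFun := fun f => ⟨fun a => (f : G → H) (g⁻¹ * a), by
        have : (mulSupport fun a => (f : G → H) (g⁻¹ * a)) ⊆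
            (fun a => g⁻¹ * a) ⁻¹' mulSupport (f : G → H) := by
          intro a ha; exact ha
        exact (f.2.preimage ((mul_right_injective g⁻¹).injOn)).subset this⟩
      invFun := fun f => ⟨fun a => (f : G → H) (g * a), by
        have : (mulSupport fun a => (f : G → H) (g * a)) ⊆
            (fun a => g * a) ⁻¹' mulSupport (f : G → H) := by
          intro a ha; exact ha
        exact (f.2.preimage ((mul_right_injective g).injOn)).subset this⟩
      left_inv := by intro f; ext a; simp
      right_inv := by intro f; ext a; simp
      map_mul' := by intro f₁ f₂; ext a; rfl }
  map_one' := by ext f a; simp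
  map_mul' := by
    intro g₁ g₂; ext f a
    show (f : G → H) ((g₁ * g₂)⁻¹ * a) = (f : G → H) (g₂⁻¹ * (g₁⁻¹ * a))
    rw [mul_inv_rev, mul_assoc]

/-- The restricted wreath product `H ≀ G`. -/
abbrev WreathProduct (G H : Type*) [Group G] [Group H] :=
  RestrictedBase G H ⋊[wreathAction G H] G


open scoped Classical

/-- The delta function at `g` with value `h`, as an element of the restricted base. -/
noncomputable def dirac {G H : Type*} [Group H] (g : G) (h : H) : RestrictedBase G H :=
  ⟨fun a => if a = g then h else 1, by
    apply (Set.finite_singleton g).subset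
    intro a ha
    by_contra hag
    simp only [Set.mem_singleton_iff] at hag
    exact ha (if_neg hag)⟩

/-- If `H` does not satisfy the law `w`, and `G` is infinite, then the restricted
wreath product `H ≀ G` does not virtually satisfy `w`: no finite-index subgroup
of `H ≀ G` satisfies `w`. -/
theorem stmt_10 {G H : Type*} [Group G] [Group H] [Infinite G]
    {d : ℕ} (w : FreeGroup (Fin d))
    (hH : ∃ h : Fin d → H, FreeGroup.lift h w ≠ 1)
    (Λ : Subgroup (WreathProduct G H)) (hΛ : Λ.FiniteIndex) :
    ∃ g : Fin d → WreathProduct G H, (∀ i, g i ∈ Λ) ∧ FreeGroup.lift g w ≠ 1 := by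
  obtain ⟨h, hw⟩ := hH
  have : Finite (WreathProduct G H ⧸ Λ) := Λ.finite_quotient_of_finiteIndex
  set x : G → Fin d → WreathProduct G H :=
    fun g i => SemidirectProduct.inl (dirac g (h i)) with hx
  obtain ⟨g, g', hne, heq⟩ := Finite.exists_ne_map_eq_of_infinite
    (fun g : G => fun i => ((x g i : WreathProduct G H) : WreathProduct G H ⧸ Λ))
  set b : Fin d → RestrictedBase G H := fun i => (dirac g (h i))⁻¹ * dirac g' (h i) with hb
  refine ⟨fun i => SemidirectProduct.inl (b i), ?_, ?_⟩
  · intro i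
    have h1 : ((x g i : WreathProduct G H) : WreathProduct G H ⧸ Λ) = x g' i :=
      congrFun heq i
    have h2 : (x g i)⁻¹ * x g' i ∈ Λ := (QuotientGroup.eq).mp h1
    have h3 : SemidirectProduct.inl (b i) = (x g i)⁻¹ * x g' i := by
      simp [hb, hx, map_mul, map_inv]
    show SemidirectProduct.inl (b i) ∈ Λ
    rwa [h3]
  · -- evaluation at g' gives back h
    set ψ : RestrictedBase G H →* H :=
      (Pi.evalMonoidHom (fun _ : G => H) g').comp (RestrictedBase G H).subtype with hψ
    have hψb : ∀ i, ψ (b i) = h i := by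
      intro i
      have hg'g : ¬ (g' = g) := fun e => hne e.symm
      simp [hψ, hb, dirac, Pi.evalMonoidHom, hg'g]
    have hcomp : ψ.comp (FreeGroup.lift b) = FreeGroup.lift (fun i => ψ (b i)) := by
      apply FreeGroup.ext_hom
      intro a; simp
    have hcomp2 : (SemidirectProduct.inl :
        RestrictedBase G H →* WreathProduct G H).comp (FreeGroup.lift b)
        = FreeGroup.lift (fun i => SemidirectProduct.inl (b i)) := by
      apply FreeGroup.ext_hom
      intro a; simp
    intro hone
    have h4 : SemidirectProduct.inl (FreeGroup.lift b w) = (1 : WreathProduct G H) := by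
      have := congrArg (fun φ : FreeGroup (Fin d) →* WreathProduct G H => φ w) hcomp2
      simpa using this.trans hone
    have h5 : FreeGroup.lift b w = 1 := SemidirectProduct.inl_injective (by simpa using h4)
    have h6 : ψ (FreeGroup.lift b w) = FreeGroup.lift h w := by
      rw [← MonoidHom.comp_apply, hcomp,
        show (fun i => ψ (b i)) = h from funext hψb]
    rw [h5, map_one] at h6
    exact hw h6.symm
end
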